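/- arXiv:1808.04663 — 3 statements merged into one kernel-verified Lean document; each statement's English description precedes it below -/
import Mathlib

section
/- Every tree decomposition T of a graph G of width k can be transformed into a simplicial decomposition T' of G of the same width in which every bag has at most 2^(k+1) children, provided T was itself simplicial; more precisely: for any simplicial decomposition T of width k of a graph G, there exists a simplicial decomposition T' of G of width k in which each bag has degree at most 2^(k+1). -/
/-- The symmetrized parent adjacency graph of a rooted tree given by a parent map. -/
def parentGraph {ι : Type} (parent : ι → Option ι) : SimpleGraph ι :=
  SimpleGraph.fromRel (fun a b => parent a = some b)

/-- A rooted tree decomposition of a graph `G`: a rooted tree given by a parent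
map (every node reaches the root by following parents), bags covering all vertices
and edges, and the set of bags containing any fixed vertex forming a connected
subtree. -/
structure RTD (V ι : Type) (G : SimpleGraph V) where
  root : ι
  parent : ι → Option ι
  parent_root : parent root = none
  reach_root : ∀ n : ι, Relation.ReflTransGen (fun a b => parent a = some b) n root
  bags : ι → Set V
  vert_cover : ∀ v : V, ∃ n : ι, v ∈ bags n
  edge_cover : ∀ u v : V, G.Adj u v → ∃ n : ι, u ∈ bags n ∧ v ∈ bags n
  vert_conn : ∀ v : V, ((parentGraph parent).induce {n : ι | v ∈ bags n}).Preconnected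

/-- A rooted tree decomposition is simplicial if the intersection of every bag
with its parent's bag induces a clique of `G`. -/
def RTD.Simplicial {V ι : Type} {G : SimpleGraph V} (T : RTD V ι G) : Prop :=
  ∀ n p : ι, T.parent n = some p →
    ∀ u ∈ T.bags n ∩ T.bags p, ∀ v ∈ T.bags n ∩ T.bags p, u ≠ v → G.Adj u v

namespace BD

open Classical

variable {V ι : Type} [Fintype V] [Fintype ι] [LinearOrder ι] {G : SimpleGraph V}
variable (T : RTD V ι G)

abbrev NR := {c : ι // c ≠ T.root}

lemma parent_isSome (c : ι) (h : c ≠ T.root) : (T.parent c).isSome := by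
  rcases (T.reach_root c).cases_head with h1 | ⟨b, hb, _⟩
  · exact absurd h1 h
  · simp [hb]

noncomputable def P (c : NR T) : ι := (T.parent c.1).get (parent_isSome T c.1 c.2)

lemma parent_P (c : NR T) : T.parent c.1 = some (P T c) := by
  simp [P]

def S (c : NR T) : Set V := T.bags c.1 ∩ T.bags (P T c)

open Classical in
noncomputable def cands (c : NR T) : Finset (NR T) :=
  Finset.univ.filter (fun c' => P T c' = P T c ∧ S T c' = S T c ∧ c'.1 < c.1)

open Classical in
noncomputable def pred (c : NR T) : Option (NR T) :=
  if h : (cands T c).Nonempty then some ((cands T c).max' h) else none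

lemma mem_cands {c c' : NR T} :
    c' ∈ cands T c ↔ P T c' = P T c ∧ S T c' = S T c ∧ c'.1 < c.1 := by
  classical
  simp [cands]


lemma pred_spec {c c' : NR T} (h : pred T c = some c') :
    P T c' = P T c ∧ S T c' = S T c ∧ c'.1 < c.1 := by
  rw [pred] at h
  split_ifs at h with h1
  · simp only [Option.some_inj] at h
    subst h
    exact (mem_cands T (c := c)).1 ((cands T c).max'_mem h1)

lemma pred_max {c c' c'' : NR T} (h : pred T c = some c')
    (h1 : P T c'' = P T c) (h2 : S T c'' = S T c) (h3 : c''.1 < c.1) : c''.1 ≤ c'.1 := by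
  rw [pred] at h
  split_ifs at h with hn
  have := (cands T c).le_max' c'' ((mem_cands T (c := c)).2 ⟨h1, h2, h3⟩)
  simp only [Option.some_inj] at h
  subst h
  exact this

lemma pred_none {c c'' : NR T} (h : pred T c = none)
    (h1 : P T c'' = P T c) (h2 : S T c'' = S T c) : ¬ c''.1 < c.1 := by
  intro h3
  rw [pred] at h
  split_ifs at h with hn
  exact hn ⟨c'', (mem_cands T (c := c)).2 ⟨h1, h2, h3⟩⟩

/-- The new index type. -/
abbrev I := ι ⊕ NR T

noncomputable def parent' : I T → Option (I T) := fun n =>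
  match n with
  | .inl c => if h : c = T.root then none else some (.inr ⟨c, h⟩)
  | .inr c =>
    match pred T c with
    | some c' => some (.inr c')
    | none => some (.inl (P T c))

def bags' : I T → Set V := fun n =>
  match n with
  | .inl c => T.bags c
  | .inr c => S T c

abbrev R' : I T → I T → Prop := fun a b => parent' T a = some b

lemma parent'_inl_root : parent' T (.inl T.root) = none := by simp [parent']

lemma parent'_inl {c : ι} (h : c ≠ T.root) :
    parent' T (.inl c) = some (.inr ⟨c, h⟩) := by simp [parent', h]

lemma parent'_inr_some {c c' : NR T} (h : pred T c = some c') :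
    parent' T (.inr c) = some (.inr c') := by simp [parent', h]

lemma parent'_inr_none {c : NR T} (h : pred T c = none) :
    parent' T (.inr c) = some (.inl (P T c)) := by simp [parent', h]

lemma reach_chain (c : NR T) :
    Relation.ReflTransGen (R' T) (.inr c) (.inl (P T c)) := by
  induction c using WellFoundedLT.induction with
  | _ c ih =>
    rcases hp : pred T c with _ | c'
    · exact Relation.ReflTransGen.single (parent'_inr_none T hp)
    · obtain ⟨h1, _, h3⟩ := pred_spec T hp
      have := ih c' (by exact h3)
      rw [h1] at this
      exact Relation.ReflTransGen.head (parent'_inr_some T hp) this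

lemma P_eq {c : NR T} {b : ι} (h : T.parent c.1 = some b) : P T c = b := by
  have := parent_P T c
  rw [this] at h
  exact (Option.some_inj.1 h)

lemma reach_inl (c : ι) :
    Relation.ReflTransGen (R' T) (.inl c) (.inl T.root) := by
  induction (T.reach_root c) using Relation.ReflTransGen.head_induction_on with
  | refl => exact Relation.ReflTransGen.refl
  | head h' h ih =>
    rename_i a b
    have ha : a ≠ T.root := fun he => by
      rw [he, T.parent_root] at h'; simp at h'
    have hP : P T ⟨a, ha⟩ = b := P_eq T h'
    refine Relation.ReflTransGen.head (parent'_inl T ha) ?_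
    refine Relation.ReflTransGen.trans ?_ ih
    rw [← hP]
    exact reach_chain T _

section Conn

variable (v : V)

/-- Adjacency in the new induced graph. -/
lemma adj' {a b : I T} (hne : a ≠ b) (h : parent' T a = some b)
    (ha : v ∈ bags' T a) (hb : v ∈ bags' T b) :
    ((parentGraph (parent' T)).induce {n : I T | v ∈ bags' T n}).Adj ⟨a, ha⟩ ⟨b, hb⟩ := by
  have hadj : (parentGraph (parent' T)).Adj a b := by
    rw [parentGraph, SimpleGraph.fromRel_adj]
    exact ⟨hne, Or.inl h⟩
  exact hadj

lemma chain_reach (c : NR T) (hv : v ∈ S T c) (hb : v ∈ T.bags (P T c)) :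
    ((parentGraph (parent' T)).induce {n : I T | v ∈ bags' T n}).Reachable
      ⟨.inr c, hv⟩ ⟨.inl (P T c), hb⟩ := by
  induction c using WellFoundedLT.induction with
  | _ c ih =>
    rcases hp : pred T c with _ | c'
    · exact (adj' T v (by simp) (parent'_inr_none T hp) hv hb).reachable
    · obtain ⟨h1, h2, h3⟩ := pred_spec T hp
      have hv' : v ∈ S T c' := h2.symm ▸ hv
      have hb' : v ∈ T.bags (P T c') := h1.symm ▸ hb
      have step := (adj' T v (by intro he; injection he with he; exact lt_irrefl _ (by rw [he] at h3; exact h3))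
        (parent'_inr_some T hp) hv hv').reachable
      have tail := ih c' h3 hv' hb'
      have he : (⟨.inl (P T c'), hb'⟩ : {n : I T | v ∈ bags' T n}) = ⟨.inl (P T c), hb⟩ :=
        Subtype.ext (congrArg Sum.inl h1)
      exact step.trans (he ▸ tail)

lemma step_reach {a b : ι} (hab : T.parent a = some b)
    (ha : v ∈ T.bags a) (hb : v ∈ T.bags b) :
    ((parentGraph (parent' T)).induce {n : I T | v ∈ bags' T n}).Reachable
      ⟨.inl a, ha⟩ ⟨.inl b, hb⟩ := by
  have hroot : a ≠ T.root := fun he => by rw [he, T.parent_root] at hab; simp at hab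
  have hP : P T ⟨a, hroot⟩ = b := P_eq T hab
  have hv : v ∈ S T ⟨a, hroot⟩ := ⟨ha, by rw [hP]; exact hb⟩
  have hb' : v ∈ T.bags (P T ⟨a, hroot⟩) := by rw [hP]; exact hb
  have first := (adj' T v (by simp) (parent'_inl T hroot) ha hv).reachable
  have tail := chain_reach T v ⟨a, hroot⟩ hv hb'
  have he : (⟨.inl (P T ⟨a, hroot⟩), hb'⟩ : {n : I T | v ∈ bags' T n}) = ⟨.inl b, hb⟩ :=
    Subtype.ext (congrArg Sum.inl hP)
  exact first.trans (he ▸ tail)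

lemma transfer {a b : {n : ι // v ∈ T.bags n}}
    (w : ((parentGraph T.parent).induce {n : ι | v ∈ T.bags n}).Walk a b) :
    ((parentGraph (parent' T)).induce {n : I T | v ∈ bags' T n}).Reachable
      ⟨.inl a.1, a.2⟩ ⟨.inl b.1, b.2⟩ := by
  induction w with
  | nil => exact SimpleGraph.Reachable.refl _
  | cons h p ih =>
    rename_i x y z
    refine SimpleGraph.Reachable.trans ?_ ih
    have hadj : (parentGraph T.parent).Adj x.1 y.1 := h
    rw [parentGraph, SimpleGraph.fromRel_adj] at hadj
    rcases hadj.2 with hxy | hyx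
    · exact step_reach T v hxy x.2 y.2
    · exact (step_reach T v hyx y.2 x.2).symm

lemma to_inl (n : I T) (hn : v ∈ bags' T n) :
    ∃ (c : ι) (hc : v ∈ T.bags c),
      ((parentGraph (parent' T)).induce {n : I T | v ∈ bags' T n}).Reachable
        ⟨n, hn⟩ ⟨.inl c, hc⟩ := by
  match n with
  | .inl c => exact ⟨c, hn, SimpleGraph.Reachable.refl _⟩
  | .inr c =>
    have hc : v ∈ T.bags c.1 := hn.1
    exact ⟨c.1, hc, ((adj' T v (by simp) (parent'_inl T c.2) hc hn).reachable).symm⟩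

lemma vert_conn' :
    ((parentGraph (parent' T)).induce {n : I T | v ∈ bags' T n}).Preconnected := by
  intro a b
  obtain ⟨c1, hc1, r1⟩ := to_inl T v a.1 a.2
  obtain ⟨c2, hc2, r2⟩ := to_inl T v b.1 b.2
  obtain ⟨w⟩ := T.vert_conn v ⟨c1, hc1⟩ ⟨c2, hc2⟩
  have := transfer T v w
  exact (r1.trans this).trans r2.symm

end Conn

noncomputable def T'
 : RTD V (I T) G where
  root := .inl T.root
  parent := parent' T
  parent_root := parent'_inl_root T
  reach_root := fun n => by
    match n with
    | .inl c => exact reach_inl T c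
    | .inr c =>
      exact (reach_chain T c).trans (reach_inl T _)
  bags := bags' T
  vert_cover := fun v => by
    obtain ⟨n, hn⟩ := T.vert_cover v
    exact ⟨.inl n, hn⟩
  edge_cover := fun u v h => by
    obtain ⟨n, hn⟩ := T.edge_cover u v h
    exact ⟨.inl n, hn⟩
  vert_conn := vert_conn' T

variable {k : ℕ}

lemma width' (hw : ∀ n : ι, (T.bags n).ncard ≤ k + 1) (n : I T) :
    (bags' T n).ncard ≤ k + 1 := by
  match n with
  | .inl c => exact hw c
  | .inr c =>
    exact le_trans (Set.ncard_le_ncard Set.inter_subset_left (Set.toFinite _)) (hw c.1)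

lemma simplicial' (hs : T.Simplicial) :
    ∀ n p : I T, parent' T n = some p →
      ∀ u ∈ bags' T n ∩ bags' T p, ∀ w ∈ bags' T n ∩ bags' T p, u ≠ w → G.Adj u w := by
  intro n p h u hu w hw huw
  match n with
  | .inl c =>
    by_cases hc : c = T.root
    · rw [hc, parent'_inl_root] at h; simp at h
    · rw [parent'_inl T hc] at h
      injection h with h
      subst h
      exact hs c (P T ⟨c, hc⟩) (parent_P T ⟨c, hc⟩) u ⟨hu.2.1, hu.2.2⟩ w ⟨hw.2.1, hw.2.2⟩ huw
  | .inr c =>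
    have key : u ∈ S T c → w ∈ S T c → G.Adj u w := fun h1 h2 =>
      hs c.1 (P T c) (parent_P T _) u h1 w h2 huw
    rcases hp : pred T c with _ | c'
    · rw [parent'_inr_none T hp] at h
      injection h with h
      subst h
      exact key hu.1 hw.1
    · rw [parent'_inr_some T hp] at h
      injection h with h
      subst h
      exact key hu.1 hw.1

lemma pred_inj {c d1 d2 : NR T} (h1 : pred T d1 = some c) (h2 : pred T d2 = some c) :
    d1 = d2 := by
  obtain ⟨hP1, hS1, hlt1⟩ := pred_spec T h1
  obtain ⟨hP2, hS2, hlt2⟩ := pred_spec T h2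
  by_contra hne
  have hne' : d1.1 ≠ d2.1 := fun he => hne (Subtype.ext he)
  rcases lt_or_gt_of_ne hne' with hlt | hlt
  · have := pred_max T h2 (hP1.symm.trans hP2) (hS1.symm.trans hS2) hlt
    exact absurd (lt_of_lt_of_le hlt1 this) (lt_irrefl _)
  · have := pred_max T h1 (hP2.symm.trans hP1) (hS2.symm.trans hS1) hlt
    exact absurd (lt_of_lt_of_le hlt2 this) (lt_irrefl _)

lemma deg_inr (c : NR T) : {n : I T | parent' T n = some (.inr c)}.ncard ≤ 2 := by
  have h2 : (2 : ℕ) = (Set.univ : Set Bool).ncard := by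
    rw [Set.ncard_univ, Nat.card_eq_fintype_card, Fintype.card_bool]
  rw [h2]
  refine Set.ncard_le_ncard_of_injOn (fun n => n.isLeft) (fun a _ => Set.mem_univ _) ?_
    (Set.finite_univ)
  rintro (a | a) ha (b | b) hb hab
  · simp only [Set.mem_setOf_eq] at ha hb
    by_cases hA : a = T.root
    · rw [hA, parent'_inl_root] at ha; simp at ha
    by_cases hB : b = T.root
    · rw [hB, parent'_inl_root] at hb; simp at hb
    rw [parent'_inl T hA] at ha
    rw [parent'_inl T hB] at hb
    simp only [Option.some_inj, Sum.inr.injEq] at ha hb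
    have hE : a = b := congrArg Subtype.val (ha.trans hb.symm)
    rw [hE]
  · simp at hab
  · simp at hab
  · simp only [Set.mem_setOf_eq] at ha hb
    rcases hpa : pred T a with _ | a' <;> rw [parent' ] at ha
    · rw [hpa] at ha; simp at ha
    · rcases hpb : pred T b with _ | b' <;> rw [parent'] at hb
      · rw [hpb] at hb; simp at hb
      · rw [hpa] at ha; rw [hpb] at hb
        simp only [Option.some_inj] at ha hb
        injection ha with ha; injection hb with hb
        subst ha
        rw [pred_inj T hpa (hb ▸ hpb)]

lemma deg_inl (q : ι) :
    {n : I T | parent' T n = some (.inl q)}.ncard ≤ 2 ^ (T.bags q).ncard := by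
  classical
  have hcard : ((T.bags q).toFinset.powerset : Finset (Finset V)).card
      = 2 ^ (T.bags q).ncard := by
    rw [Finset.card_powerset, Set.ncard_eq_toFinset_card']
  rw [← hcard, ← Set.ncard_coe_finset]
  refine Set.ncard_le_ncard_of_injOn
    (fun n => match n with | .inl _ => (∅ : Finset V) | .inr c => (S T c).toFinset)
    ?_ ?_ (Set.toFinite _)
  · rintro (a | a) ha
    · simp only [Set.mem_setOf_eq] at ha
      by_cases hA : a = T.root
      · rw [hA, parent'_inl_root] at ha; simp at ha
      · rw [parent'_inl T hA] at ha; simp at ha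
    · simp only [Set.mem_setOf_eq] at ha
      rcases hpa : pred T a with _ | a' <;> rw [parent'] at ha <;> rw [hpa] at ha
      · simp only [Option.some_inj] at ha
        injection ha with ha
        simp only [Finset.mem_coe, Finset.mem_powerset]
        intro x hx
        simp only [Set.mem_toFinset] at hx
        have : x ∈ T.bags (P T a) := hx.2
        rw [ha] at this
        simpa using this
      · simp at ha
  · rintro (a | a) ha (b | b) hb hab
    · simp only [Set.mem_setOf_eq] at ha
      by_cases hA : a = T.root
      · rw [hA, parent'_inl_root] at ha; simp at ha
      · rw [parent'_inl T hA] at ha; simp at ha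
    · simp only [Set.mem_setOf_eq] at ha
      by_cases hA : a = T.root
      · rw [hA, parent'_inl_root] at ha; simp at ha
      · rw [parent'_inl T hA] at ha; simp at ha
    · simp only [Set.mem_setOf_eq] at hb
      by_cases hB : b = T.root
      · rw [hB, parent'_inl_root] at hb; simp at hb
      · rw [parent'_inl T hB] at hb; simp at hb
    · simp only [Set.mem_setOf_eq] at ha hb
      rcases hpa : pred T a with _ | a' <;> rw [parent'] at ha <;> rw [hpa] at ha
      · rcases hpb : pred T b with _ | b' <;> rw [parent'] at hb <;> rw [hpb] at hb
        · simp only [Option.some_inj] at ha hb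
          injection ha with ha; injection hb with hb
          simp only at hab
          have hS : S T a = S T b := by
            have := congrArg (fun (s : Finset V) => (s : Set V)) hab
            simpa [Set.coe_toFinset] using this
          have hP : P T a = P T b := ha.trans hb.symm
          have hval : a.1 = b.1 := by
            by_contra hne
            rcases lt_or_gt_of_ne hne with hlt | hlt
            · exact pred_none T hpb hP hS hlt
            · exact pred_none T hpa hP.symm hS.symm hlt
          rw [Subtype.ext hval]
        · simp at hb
      · simp at ha

end BD

/-- Any simplicial decomposition of width `k` of a graph `G` can be transformed
into a simplicial decomposition of `G` of width `k` in which every bag has at most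
`2^(k+1)` children. -/
theorem simplicial_bounded_degree {V ι : Type} [Fintype V] [Fintype ι]
    (G : SimpleGraph V) (k : ℕ) (T : RTD V ι G)
    (hw : ∀ n : ι, (T.bags n).ncard ≤ k + 1) (hs : T.Simplicial) :
    ∃ (ι' : Type) (_ : Fintype ι') (T' : RTD V ι' G),
      (∀ n : ι', (T'.bags n).ncard ≤ k + 1) ∧ T'.Simplicial ∧
      ∀ p : ι', {n : ι' | T'.parent n = some p}.ncard ≤ 2 ^ (k + 1) := by
  classical
  letI : LinearOrder ι := LinearOrder.lift' (Fintype.equivFin ι) (Equiv.injective _)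
  refine ⟨BD.I T, inferInstance, BD.T' T, ?_, ?_, ?_⟩
  · exact BD.width' T hw
  · exact BD.simplicial' T hs
  · intro p
    match p with
    | .inl q =>
      refine le_trans (BD.deg_inl T q) ?_
      exact Nat.pow_le_pow_right (by norm_num) (hw q)
    | .inr c =>
      refine le_trans (BD.deg_inr T c) ?_
      calc (2 : ℕ) = 2 ^ 1 := by norm_num
        _ ≤ 2 ^ (k + 1) := Nat.pow_le_pow_right (by norm_num) (by omega)
end

section
/- The cycle graph C_n on n ≥ 4 vertices has no simplicial decomposition of width strictly less than n − 1; consequently the family of cycles has unbounded simplicial width, while each cycle has treewidth at most 2. -/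
/-- The cycle graph on `Fin n`: `i` is adjacent to `i + 1` (mod `n`). -/
def cycleG (n : ℕ) : SimpleGraph (Fin n) :=
  SimpleGraph.fromRel (fun i j => (j : ℕ) = ((i : ℕ) + 1) % n)

/-!
If no clique separates a graph `G`, every simplicial decomposition of `G` has a bag containing
all vertices. Take a deepest node `m` whose subtree still covers all vertices, and suppose `v`
is missing from the bag `B(m)`; then `v` occurs below a child `c` of `m`. A vertex occurring
both inside and outside the subtree of `c` lies in the clique `S = B(c) ∩ B(m)`, so every edge
of `G - S` has both or neither endpoint covered below `c`. Since `G - S` is connected, all of it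
is covered below `c`, and so is `S ⊆ B(c)`, contradicting the choice of `m`.

In a cycle of length at least 4 a clique is at most an edge, and removing it leaves a path. The
width-2 decomposition is the fan triangulation from vertex `0`, its triangles arranged along a
path.
-/

open SimpleGraph Relation

theorem SimpleGraph.Reachable.iff_of_forall_adj {W : Type} {H : SimpleGraph W} {P : W → Prop}
    (hP : ∀ x y, H.Adj x y → (P x ↔ P y)) {x y : W} (hxy : H.Reachable x y) :
    P x ↔ P y := by
  rw [reachable_iff_reflTransGen] at hxy
  induction hxy with
  | refl => rfl
  | tail _ hyz ih => exact ih.trans (hP _ _ hyz)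

namespace RTD

variable {V ι : Type} {G : SimpleGraph V} (T : RTD V ι G)

def subtree (b : ι) : Set ι := {a | ReflTransGen (fun x y => T.parent x = some y) a b}

def subtreeVerts (b : ι) : Set V := {v | ∃ a ∈ T.subtree b, v ∈ T.bags a}

theorem not_transGen_parent_self (a : ι) :
    ¬ TransGen (fun x y => T.parent x = some y) a a := by
  intro hcycle
  have on_cycle : ∀ x, ReflTransGen (fun x y => T.parent x = some y) a x →
      TransGen (fun x y => T.parent x = some y) x x := by
    intro x hx
    induction hx with
    | refl => exact hcycle
    | tail _ hxy ih =>
      obtain ⟨z, hxz, hzx⟩ := TransGen.head'_iff.1 ih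
      obtain rfl := Option.some_inj.1 (hxy.symm.trans hxz)
      exact TransGen.tail' hzx hxy
  obtain ⟨_, hroot, _⟩ := TransGen.head'_iff.1 (on_cycle _ (T.reach_root a))
  simp [T.parent_root] at hroot

theorem wellFounded_child [Finite ι] : WellFounded (fun c m => T.parent c = some m) := by
  have : Std.Irrefl (TransGen fun x y => T.parent x = some y) := ⟨T.not_transGen_parent_self⟩
  exact (Finite.wellFounded_of_trans_of_irrefl
    (TransGen fun x y => T.parent x = some y)).mono fun _ _ h => TransGen.single h

theorem eq_of_parentGraph_adj_of_mem_subtree {c x y : ι} (hxy : (parentGraph T.parent).Adj x y)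
    (hx : x ∈ T.subtree c) (hy : y ∉ T.subtree c) : x = c ∧ T.parent c = some y := by
  rcases hxy.2 with hxy | hyx
  · rcases ReflTransGen.cases_head hx with rfl | ⟨z, hxz, hz⟩
    · exact ⟨rfl, hxy⟩
    · obtain rfl := Option.some_inj.1 (hxy.symm.trans hxz)
      exact absurd hz hy
  · exact absurd (ReflTransGen.head (r := fun x y => T.parent x = some y) hyx hx) hy

theorem mem_bags_of_mem_subtree_of_notMem_subtree {c m a b : ι} {v : V}
    (hcm : T.parent c = some m) (ha : a ∈ T.subtree c) (hb : b ∉ T.subtree c)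
    (hva : v ∈ T.bags a) (hvb : v ∈ T.bags b) : v ∈ T.bags c ∩ T.bags m := by
  obtain ⟨p⟩ := T.vert_conn v ⟨a, hva⟩ ⟨b, hvb⟩
  obtain ⟨d, -, hd_in, hd_out⟩ := p.exists_boundary_dart (Subtype.val ⁻¹' T.subtree c) ha hb
  obtain ⟨hc, hm⟩ := T.eq_of_parentGraph_adj_of_mem_subtree d.adj hd_in hd_out
  rw [hcm, Option.some_inj] at hm
  exact ⟨hc ▸ d.fst.2, hm ▸ d.snd.2⟩

theorem subtreeVerts_eq_univ_of_child (hT : T.Simplicial)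
    (hG : ∀ S : Set V, G.IsClique S → (G.induce Sᶜ).Preconnected) {c m : ι} {v : V}
    (hcm : T.parent c = some m) (hvc : v ∈ T.subtreeVerts c) (hvm : v ∉ T.bags m) :
    T.subtreeVerts c = Set.univ := by
  set S := T.bags c ∩ T.bags m
  have hS : G.IsClique S := fun x hx y hy hxy => hT c m hcm x hx y hy hxy
  have separated :
      ∀ w ∈ T.subtreeVerts c, ∀ b ∉ T.subtree c, w ∈ T.bags b → w ∈ S := by
    rintro w ⟨a, ha, hwa⟩ b hb hwb
    exact T.mem_bags_of_mem_subtree_of_notMem_subtree hcm ha hb hwa hwb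
  have closed : ∀ x y : ↥Sᶜ, (G.induce Sᶜ).Adj x y →
      (x.1 ∈ T.subtreeVerts c ↔ y.1 ∈ T.subtreeVerts c) := by
    intro x y hxy
    obtain ⟨b, hxb, hyb⟩ := T.edge_cover x y hxy
    by_cases hb : b ∈ T.subtree c
    · exact iff_of_true ⟨b, hb, hxb⟩ ⟨b, hb, hyb⟩
    · exact iff_of_false (fun hx => x.2 (separated _ hx b hb hxb))
        (fun hy => y.2 (separated _ hy b hb hyb))
  refine Set.eq_univ_of_forall fun w => ?_
  by_cases hw : w ∈ S
  · exact ⟨c, ReflTransGen.refl, hw.1⟩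
  · exact ((hG S hS ⟨v, fun h => hvm h.2⟩ ⟨w, hw⟩).iff_of_forall_adj closed).1 hvc

theorem exists_bags_eq_univ [Finite ι] (hT : T.Simplicial)
    (hG : ∀ S : Set V, G.IsClique S → (G.induce Sᶜ).Preconnected) :
    ∃ m, T.bags m = Set.univ := by
  have hroot : T.subtreeVerts T.root = Set.univ := by
    refine Set.eq_univ_of_forall fun v => ?_
    obtain ⟨a, ha⟩ := T.vert_cover v
    exact ⟨a, T.reach_root a, ha⟩
  obtain ⟨m, hm, hmin⟩ := T.wellFounded_child.has_min {m | T.subtreeVerts m = Set.univ}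
    ⟨T.root, hroot⟩
  refine ⟨m, Set.eq_univ_of_forall fun v => ?_⟩
  by_contra hvm
  obtain ⟨a, ha, hva⟩ : v ∈ T.subtreeVerts m := hm ▸ Set.mem_univ v
  rcases ReflTransGen.cases_tail ha with rfl | ⟨c, hac, hcm⟩
  · exact hvm hva
  · exact hmin c (T.subtreeVerts_eq_univ_of_child hT hG hcm ⟨a, hac, hva⟩ hvm) hcm

end RTD

theorem cycleG_eq_cycleGraph (n : ℕ) : cycleG n = cycleGraph n := by
  ext u v
  match n with
  | 0 => exact u.elim0
  | 1 => simp [cycleG, Subsingleton.elim u v]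
  | n + 2 =>
    have succ_iff (a b : Fin (n + 2)) : b.val = (a.val + 1) % (n + 2) ↔ b = a + 1 := by
      rw [Fin.ext_iff, Fin.val_add, Fin.val_one]
    have ne_succ (a : Fin (n + 2)) : a ≠ a + 1 := by simp
    rw [cycleGraph_adj, sub_eq_iff_eq_add', sub_eq_iff_eq_add', cycleG, fromRel_adj, succ_iff,
      succ_iff]
    constructor
    · exact fun h => h.2.symm
    · rintro (rfl | rfl)
      · exact ⟨(ne_succ v).symm, Or.inr rfl⟩
      · exact ⟨ne_succ u, Or.inl rfl⟩

theorem pathGraph_neighborSet_subsingleton {n : ℕ} {i : Fin n}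
    (hi : i.val = 0 ∨ i.val + 1 = n) :
    ((pathGraph n).neighborSet i).Subsingleton := by
  intro x hx y hy
  rw [mem_neighborSet, pathGraph_adj] at hx hy
  ext
  omega

theorem cycleGraph_induce_compl_preconnected {n : ℕ} {b : Fin (n + 2)} {S : Set (Fin (n + 2))}
    (hS : S ⊆ {b, b + 1}) : ((cycleGraph (n + 2)).induce Sᶜ).Preconnected := by
  -- `P` is the Hamiltonian path of the cycle running from `b + 1` around to `b`.
  set P := (pathGraph (n + 2)).comap (Equiv.subRight (b + 1))
  have hP : P.Preconnected := (Iso.comap _ _).preconnected_iff.2 (pathGraph_preconnected _)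
  have hle : P ≤ cycleGraph (n + 2) := fun x y hxy => by
    simpa [cycleGraph_adj] using pathGraph_le_cycleGraph hxy
  have hleaf : ∀ v ∉ Sᶜ, (P.neighborSet v).Subsingleton := by
    intro v hv
    refine (pathGraph_neighborSet_subsingleton ?_).preimage (Equiv.subRight (b + 1)).injective
    rcases hS (not_not.1 hv) with rfl | rfl
    · right; simp [Fin.coe_neg_one]
    · left; simp
  exact (hP.induce_of_degree_eq_one hleaf).mono fun x y h => hle h

open Fin.CommRing in
theorem cycleGraph_isClique_subset_pair {n : ℕ} {S : Set (Fin (n + 4))}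
    (hS : (cycleGraph (n + 4)).IsClique S) : ∃ b, S ⊆ {b, b + 1} := by
  by_cases hsub : S.Subsingleton
  · rcases hsub.eq_empty_or_singleton with rfl | ⟨b, rfl⟩
    · exact ⟨0, Set.empty_subset _⟩
    · exact ⟨b, by simp⟩
  obtain ⟨u, hu, v, hv, huv⟩ := Set.not_subsingleton_iff.1 hsub
  wlog hvu : v = u + 1 generalizing u v
  · rcases (cycleGraph_adj.1 (hS hu hv huv)) with h | h
    · exact this v hv u hu huv.symm (sub_eq_iff_eq_add'.1 h)
    · exact absurd (sub_eq_iff_eq_add'.1 h) hvu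
  subst hvu
  refine ⟨u, fun w hw => ?_⟩
  by_contra hw'
  simp only [Set.mem_insert_iff, Set.mem_singleton_iff, not_or] at hw'
  have h3 : (3 : Fin (n + 4)) ≠ 0 := by
    simp [Fin.ext_iff, Nat.mod_eq_of_lt (show 3 < n + 4 by omega)]
  rcases cycleGraph_adj.1 (hS hw hu hw'.1) with h1 | h1
  · exact hw'.2 (sub_eq_iff_eq_add'.1 h1)
  rcases cycleGraph_adj.1 (hS hw hv hw'.2) with h2 | h2
  · exact h3 (by linear_combination -(h1 + h2))
  · exact one_ne_zero (by linear_combination h2 - h1)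

theorem cycleGraph_induce_compl_preconnected_of_isClique {n : ℕ} {S : Set (Fin (n + 4))}
    (hS : (cycleGraph (n + 4)).IsClique S) : ((cycleGraph (n + 4)).induce Sᶜ).Preconnected :=
  let ⟨_, hb⟩ := cycleGraph_isClique_subset_pair hS
  cycleGraph_induce_compl_preconnected hb

def pathParent (m : ℕ) (i : Fin (m + 1)) : Option (Fin (m + 1)) :=
  if i = 0 then none else some (i - 1)

theorem pathParent_eq_some {m : ℕ} {i j : Fin (m + 1)} :
    pathParent m i = some j ↔ j.val + 1 = i.val := by
  unfold pathParent
  split_ifs with hi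
  · simp [hi]
  · rw [Option.some_inj, Fin.ext_iff, Fin.coe_sub_one, if_neg hi]
    have : i.val ≠ 0 := Fin.val_ne_zero_iff.2 hi
    omega

theorem parentGraph_pathParent (m : ℕ) : parentGraph (pathParent m) = pathGraph (m + 1) := by
  ext i j
  rw [parentGraph, fromRel_adj, pathParent_eq_some, pathParent_eq_some, pathGraph_adj]
  constructor
  · exact fun h => h.2.symm
  · intro h
    exact ⟨fun hij => by subst hij; omega, h.symm⟩

theorem pathGraph_induce_preconnected {m : ℕ} {s : Set (Fin m)} (hs : s.OrdConnected) :
    ((pathGraph m).induce s).Preconnected := by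
  suffices h : ∀ k (x y : s), y.1.val = x.1.val + k → ((pathGraph m).induce s).Reachable x y by
    intro x y
    rcases le_total x.1.val y.1.val with hxy | hxy
    · exact h _ x y (Nat.add_sub_of_le hxy).symm
    · exact (h _ y x (Nat.add_sub_of_le hxy).symm).symm
  intro k
  induction k with
  | zero => exact fun x y hxy => (Subtype.ext (Fin.ext hxy)).symm ▸ Reachable.refl _
  | succ k ih =>
    intro x y hxy
    have hz : (⟨x.1.val + k, by omega⟩ : Fin m) ∈ s :=
      hs.out x.2 y.2 ⟨by simp [Fin.le_def], by simp only [Fin.le_def]; omega⟩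
    refine (ih x ⟨_, hz⟩ rfl).trans (Adj.reachable ?_)
    simp only [comap_adj, Function.Embedding.subtype_apply, pathGraph_adj]
    omega

theorem reflTransGen_pathParent_zero {m : ℕ} (i : Fin (m + 1)) :
    ReflTransGen (fun x y => pathParent m x = some y) i 0 := by
  induction i using Fin.induction with
  | zero => rfl
  | succ i ih => exact ReflTransGen.head (pathParent_eq_some.2 (by simp)) ih

def RTD.ofPath {V : Type} {G : SimpleGraph V} {m : ℕ} (bags : Fin (m + 1) → Set V)
    (vert_cover : ∀ v, ∃ i, v ∈ bags i)
    (edge_cover : ∀ u v, G.Adj u v → ∃ i, u ∈ bags i ∧ v ∈ bags i)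
    (ordConnected : ∀ v, {i | v ∈ bags i}.OrdConnected) : RTD V (Fin (m + 1)) G where
  root := 0
  parent := pathParent m
  parent_root := if_pos rfl
  reach_root := reflTransGen_pathParent_zero
  bags := bags
  vert_cover := vert_cover
  edge_cover := edge_cover
  vert_conn v := parentGraph_pathParent m ▸ pathGraph_induce_preconnected (ordConnected v)

def fanBags (m : ℕ) (k : Fin (m + 2)) : Set (Fin (m + 4)) := {0, k.succ.castSucc, k.succ.succ}

theorem mem_fanBags {m : ℕ} {k : Fin (m + 2)} {v : Fin (m + 4)} :
    v ∈ fanBags m k ↔ v.val = 0 ∨ v.val = k.val + 1 ∨ v.val = k.val + 2 := by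
  simp only [fanBags, Set.mem_insert_iff, Set.mem_singleton_iff, Fin.ext_iff, Fin.val_zero,
    Fin.val_succ, Fin.val_castSucc]

theorem exists_mem_fanBags_of_succ {m : ℕ} {u v : Fin (m + 4)}
    (h : v.val = (u.val + 1) % (m + 4)) :
    ∃ k, u ∈ fanBags m k ∧ v ∈ fanBags m k := by
  simp only [mem_fanBags]
  rcases Nat.lt_or_ge u.val (m + 3) with hu | hu
  · rw [Nat.mod_eq_of_lt (by omega)] at h
    exact ⟨⟨u.val - 1, by omega⟩, by dsimp only; omega, by dsimp only; omega⟩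
  · rw [show u.val + 1 = m + 4 by omega, Nat.mod_self] at h
    exact ⟨Fin.last _, by rw [Fin.val_last]; omega, by rw [Fin.val_last]; omega⟩

def fanDecomposition (m : ℕ) : RTD (Fin (m + 4)) (Fin (m + 2)) (cycleG (m + 4)) :=
  RTD.ofPath (fanBags m)
    (fun v => ⟨⟨min (v.val - 1) (m + 1), by omega⟩, mem_fanBags.2 (by dsimp only; omega)⟩)
    (fun u v huv => huv.2.elim exists_mem_fanBags_of_succ
      fun h => (exists_mem_fanBags_of_succ h).imp fun _ => And.symm)
    (fun v => ⟨fun x hx y hy z hz => by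
      simp only [Set.mem_ofPred_eq, mem_fanBags] at hx hy ⊢
      simp only [Set.mem_Icc, Fin.le_def] at hz
      omega⟩)

theorem ncard_fanBags_le (m : ℕ) (k : Fin (m + 2)) : (fanBags m k).ncard ≤ 3 :=
  (Set.ncard_insert_le _ _).trans (Nat.succ_le_succ ((Set.ncard_insert_le _ _).trans (by simp)))

/-- For n ≥ 4, the cycle C_n has no simplicial decomposition of width strictly less
than n − 1 (i.e., with all bags of size at most n − 1), while it does have a tree
decomposition of width at most 2 (all bags of size at most 3). -/
theorem cycle_simplicial_width (n : ℕ) (hn : 4 ≤ n) :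
    (¬ ∃ (ι : Type) (_ : Fintype ι) (T : RTD (Fin n) ι (cycleG n)),
        T.Simplicial ∧ ∀ b : ι, (T.bags b).ncard ≤ n - 1) ∧
    (∃ (ι : Type) (_ : Fintype ι) (T : RTD (Fin n) ι (cycleG n)),
        ∀ b : ι, (T.bags b).ncard ≤ 3) := by
  obtain ⟨m, rfl⟩ := Nat.exists_eq_add_of_le' hn
  refine ⟨?_, Fin (m + 2), inferInstance, fanDecomposition m, ncard_fanBags_le m⟩
  rintro ⟨ι, _, T, hT, hwidth⟩
  obtain ⟨b, hb⟩ := T.exists_bags_eq_univ hT fun S hS => by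
    rw [cycleG_eq_cycleGraph] at hS ⊢
    exact cycleGraph_induce_compl_preconnected_of_isClique hS
  have hcard := hwidth b
  rw [hb, Set.ncard_univ, Nat.card_eq_fintype_card, Fintype.card_fin] at hcard
  omega
end

section
/- Any conjunctive query Q_n equivalent (over all finite instances) to the Datalog program P_n computing the predicate R_n defined by R₀(x,y) ← R(x,y) and R_i(x,y) ← G(x,y) ∧ R_{i−1}(x,z) ∧ R_{i−1}(z,y) with goal Goal() ← R_n(x,y), must have at least 2^n atoms. -/
/-- The intensional predicates of the Datalog program `P_n`: `Ri R G 0 = R`, and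
`Ri R G (i+1) x y` holds iff `G x y` holds and there is `z` with
`Ri R G i x z` and `Ri R G i z y` (least fixpoint of the given rules). -/
def Ri {D : Type} (R G : D → D → Prop) : ℕ → D → D → Prop
  | 0 => R
  | i + 1 => fun x y => G x y ∧ ∃ z : D, Ri R G i x z ∧ Ri R G i z y

/-- A conjunctive query over binary relations R and G: a finite set of atoms, each
being a flag (`true` for an R-atom, `false` for a G-atom) together with a pair of
variables. `I ⊨ Q` iff some valuation of the variables sends every atom to a fact. -/
def cqSat {Var D : Type} (Q : Finset (Bool × Var × Var))
    (R G : D → D → Prop) : Prop :=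
  ∃ h : Var → D, ∀ a ∈ Q, cond a.1 (R (h a.2.1) (h a.2.2)) (G (h a.2.1) (h a.2.2))

/-- On the successor path of length `2^n`, `Ri` holds whenever the endpoints are
exactly `2^i` apart. -/
lemma RiPath (n : ℕ) : ∀ i, i ≤ n → ∀ x y : Fin (2^n+1),
    (y:ℕ) = x + 2^i →
    Ri (fun a b : Fin (2^n+1) => (b:ℕ) = a + 1) (fun _ _ => True) i x y := by
  intro i
  induction i with
  | zero => intro _ x y hxy; simpa [Ri] using hxy
  | succ i ih =>
    intro hi x y hxy
    have hp : (2:ℕ)^(i+1) = 2^i + 2^i := by rw [pow_succ]; ring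
    have hyn : (y:ℕ) < 2^n + 1 := y.isLt
    have h2 : (x:ℕ) + 2^i < 2^n + 1 := by omega
    refine ⟨trivial, ⟨(x:ℕ) + 2^i, h2⟩, ?_, ?_⟩
    · exact ih (by omega) x _ rfl
    · exact ih (by omega) _ y (by simp; omega)

/-- If every `R'`-fact is a successor edge, then `Ri R' G' i x y` forces
`y = x + 2^i` and the presence of every intermediate edge. -/
lemma RiEdges {m : ℕ} (R' G' : Fin m → Fin m → Prop)
    (hR : ∀ x y, R' x y → (y:ℕ) = x + 1) :
    ∀ i (x y : Fin m), Ri R' G' i x y →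
      (y:ℕ) = x + 2^i ∧
        ∀ k, (x:ℕ) ≤ k → k < (y:ℕ) → ∃ u v, R' u v ∧ (u:ℕ) = k := by
  intro i
  induction i with
  | zero =>
    intro x y hxy
    have hy := hR x y hxy
    exact ⟨by simpa using hy, fun k h1 h2 => ⟨x, y, hxy, by omega⟩⟩
  | succ i ih =>
    rintro x y ⟨-, z, h1, h2⟩
    obtain ⟨e1, f1⟩ := ih x z h1
    obtain ⟨e2, f2⟩ := ih z y h2
    constructor
    · rw [e2, e1, pow_succ]; ring
    · intro k hk1 hk2
      by_cases hkz : k < (z:ℕ)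
      · exact f1 k hk1 hkz
      · exact f2 k (by omega) hk2

/-- Any conjunctive query equivalent, over all finite instances, to the Datalog
program `P_n` (whose goal holds iff `R_n(x,y)` holds for some `x, y`) must have at
least `2^n` atoms. -/
theorem equivalent_cq_is_large {Var : Type} [Fintype Var] (n : ℕ)
    (Q : Finset (Bool × Var × Var))
    (heq : ∀ (D : Type) [Fintype D] (R G : D → D → Prop),
      cqSat Q R G ↔ ∃ x y : D, Ri R G n x y) :
    2 ^ n ≤ Q.card := by
  have hpos : 0 < 2^n + 1 := Nat.succ_pos _
  set D := Fin (2^n+1) with hD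
  have hsat : cqSat Q (fun a b : D => (b:ℕ) = a + 1) (fun _ _ => True) := by
    rw [heq]
    refine ⟨⟨0, hpos⟩, ⟨2^n, by omega⟩, RiPath n n le_rfl _ _ (by simp)⟩
  obtain ⟨h, hh⟩ := hsat
  set R' : D → D → Prop :=
    fun u v => ∃ a ∈ Q, a.1 = true ∧ h a.2.1 = u ∧ h a.2.2 = v with hR'def
  have hsat' : cqSat Q R' (fun _ _ => True) := by
    refine ⟨h, fun a ha => ?_⟩
    cases hab : a.1 with
    | true => simpa [hab] using ⟨a, ha, hab, rfl, rfl⟩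
    | false => simp [hab]
  rw [heq] at hsat'
  obtain ⟨x, y, hxy⟩ := hsat'
  have hR' : ∀ u v : D, R' u v → (v:ℕ) = u + 1 := by
    rintro u v ⟨a, ha, hat, hu, hv⟩
    have hfact := hh a ha
    rw [hat] at hfact
    simp only [cond] at hfact
    rw [hu, hv] at hfact
    exact hfact
  obtain ⟨hy, hf⟩ := RiEdges R' (fun _ _ => True) hR' n x y hxy
  have hsub : Finset.Ico (x:ℕ) (y:ℕ) ⊆ Q.image (fun a => ((h a.2.1 : D) : ℕ)) := by
    intro k hk
    rw [Finset.mem_Ico] at hk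
    obtain ⟨u, v, ⟨a, ha, -, hu, -⟩, huk⟩ := hf k hk.1 hk.2
    exact Finset.mem_image.mpr ⟨a, ha, by rw [hu, huk]⟩
  calc 2^n = (Finset.Ico (x:ℕ) (y:ℕ)).card := by rw [Nat.card_Ico]; omega
    _ ≤ (Q.image _).card := Finset.card_le_card hsub
    _ ≤ Q.card := Finset.card_image_le
end
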